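/- arXiv:1903.03850 — 5 statements merged into one kernel-verified Lean document; each statement's English description precedes it below -/
import Mathlib

section
/- If X₀ is a resistant optimal point of a convex optimization problem min_{X ∈ S} F(X), then X₀ is the unique global optimal point of the problem. -/
/-!
If `X'` is a second minimizer, tilt the objective by `D = t • (X₀ - X')` with `t > 0`. Every
minimizer `Y` of the tilted problem does at least as well as `X'` there while doing no better than
`X'` for `F` alone, so `⟪X₀ - X', Y - X'⟫ ≤ 0`: `Y` lies in the half-space beyond `X'`, at distance
at least `‖X₀ - X'‖` from `X₀`. Small `t` keeps `D` in any neighbourhood of `0`, so resistance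
forces `‖X₀ - X'‖ = 0`.
-/

open Filter Topology
open scoped RealInnerProductSpace

theorem exists_pos_smul_mem_of_mem_nhds_zero {E : Type*} [AddCommGroup E] [Module ℝ E]
    [TopologicalSpace E] [ContinuousSMul ℝ E] {M : Set E} (hM : M ∈ 𝓝 0) (v : E) :
    ∃ t : ℝ, 0 < t ∧ t • v ∈ M := by
  have hsmul : Tendsto (fun t : ℝ => t • v) (𝓝[>] 0) (𝓝 0) :=
    ((continuous_id.smul continuous_const).tendsto' (0 : ℝ) (0 : E) (zero_smul ℝ v)).mono_left
      nhdsWithin_le_nhds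
  exact (eventually_mem_nhdsWithin.and (hsmul.eventually_mem hM)).exists

section InnerProductSpace

variable {E : Type*} [NormedAddCommGroup E] [InnerProductSpace ℝ E]

theorem dist_le_dist_of_inner_sub_nonpos {x y z : E} (h : ⟪x - y, z - y⟫ ≤ 0) :
    dist x y ≤ dist z x := by
  rw [dist_eq_norm, dist_comm, dist_eq_norm]
  have hsq : ‖x - y‖ ^ 2 ≤ ‖x - y‖ * ‖x - z‖ :=
    calc ‖x - y‖ ^ 2 = ⟪x - y, x - z⟫ + ⟪x - y, z - y⟫ := by
          rw [← inner_add_right, sub_add_sub_cancel, real_inner_self_eq_norm_sq]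
      _ ≤ ⟪x - y, x - z⟫ := by linarith
      _ ≤ ‖x - y‖ * ‖x - z‖ := real_inner_le_norm _ _
  nlinarith [norm_nonneg (x - y), norm_nonneg (x - z)]

theorem dist_le_dist_of_le_tilted {S : Set E} {F : E → ℝ} {x₀ x y : E} {t : ℝ} (ht : 0 < t)
    (hx : ∀ z ∈ S, F x ≤ F z) (hy : y ∈ S)
    (hy_tilted : F y + ⟪t • (x₀ - x), y⟫ ≤ F x + ⟪t • (x₀ - x), x⟫) :
    dist x₀ x ≤ dist y x₀ := by
  have hinner : t * ⟪x₀ - x, y - x⟫ ≤ 0 := by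
    rw [inner_sub_right, mul_sub, ← real_inner_smul_left, ← real_inner_smul_left]
    linarith [hx y hy]
  exact dist_le_dist_of_inner_sub_nonpos (nonpos_of_mul_nonpos_right hinner ht)

end InnerProductSpace

theorem resistant_optimal_point_unique_general {d : ℕ}
    (S : Set (EuclideanSpace ℝ (Fin d))) (F : EuclideanSpace ℝ (Fin d) → ℝ)
    (X₀ : EuclideanSpace ℝ (Fin d))
    (hres : ∀ N ∈ nhds X₀, ∃ M ∈ nhds (0 : EuclideanSpace ℝ (Fin d)),
      ∀ D ∈ M, ∃ Y ∈ N, Y ∈ S ∧ ∀ X ∈ S, F Y + ⟪D, Y⟫ ≤ F X + ⟪D, X⟫) :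
    ∀ X' ∈ S, (∀ X ∈ S, F X' ≤ F X) → X' = X₀ := by
  intro X' hX' hX'_min
  by_contra hne
  have hr : 0 < dist X₀ X' := dist_pos.mpr (Ne.symm hne)
  obtain ⟨M, hM, hM_tilt⟩ := hres _ (Metric.ball_mem_nhds X₀ hr)
  obtain ⟨t, ht, htM⟩ := exists_pos_smul_mem_of_mem_nhds_zero hM (X₀ - X')
  obtain ⟨Y, hY_near, hY, hY_min⟩ := hM_tilt _ htM
  have hY_far := dist_le_dist_of_le_tilted ht hX'_min hY (hY_min X' hX')
  exact (Metric.mem_ball.mp hY_near).not_ge hY_far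

/-- A resistant optimal point of a convex optimization problem is its unique optimal point. -/
theorem resistant_optimal_point_unique {d : ℕ}
    (S : Set (EuclideanSpace ℝ (Fin d))) (F : EuclideanSpace ℝ (Fin d) → ℝ)
    (hS : Convex ℝ S) (hF : ConvexOn ℝ S F)
    (X₀ : EuclideanSpace ℝ (Fin d)) (hX₀ : X₀ ∈ S)
    (hopt : ∀ X ∈ S, F X₀ ≤ F X)
    (hres : ∀ N ∈ nhds X₀, ∃ M ∈ nhds (0 : EuclideanSpace ℝ (Fin d)),
      ∀ D ∈ M, ∃ Y ∈ N, Y ∈ S ∧ ∀ X ∈ S, F Y + ⟪D, Y⟫ ≤ F X + ⟪D, X⟫) :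
    ∀ X' ∈ S, (∀ X ∈ S, F X' ≤ F X) → X' = X₀ :=
  resistant_optimal_point_unique_general S F X₀ hres
end

section
/- The proximal operator of φ_{ρ,ζ,η}(p,q) = ⟨p,ζ⟩ + ⟨q,η⟩ + ρ‖p − q‖₂ with step μ > 0 at the point (p,q) equals T_{μρ}(p − μζ, q − μη), where T_λ(a,b) = ((a+b)/2 + t_λ((a−b)/2), (a+b)/2 − t_λ((a−b)/2)) and t_λ(c) = ((‖c‖−λ)/‖c‖)c if ‖c‖ ≥ λ and 0 otherwise. -/
/-!
Completing the square, the objective equals `μ⁻¹ (‖x - a‖²/2 + ‖y - b‖²/2 + μρ‖x - y‖)` plus a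
constant, where `(a, b) = (p - μζ, q - μη)`. In the coordinates `u = (x + y)/2`, `v = (x - y)/2`
this is `‖u - (a + b)/2‖²` plus twice `‖v - c‖²/2 + μρ‖v‖` with `c = (a - b)/2`, and the latter is
minimised by the soft threshold `t_{μρ}(c)`, since `c - t_{μρ}(c)` is a subgradient of `μρ‖·‖` there.
This yields the quadratic growth `f(T) + ‖(x, y) - T‖²/(2μ) ≤ f(x, y)`, which gives both
minimality and uniqueness.
-/

open scoped RealInnerProductSpace

theorem forall_le_and_eq_of_forall_add_le {α : Type*} {f d : α → ℝ} {z : α}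
    (hd : ∀ x, 0 ≤ d x) (hd_eq_zero : ∀ x, d x = 0 → x = z) (h : ∀ x, f z + d x ≤ f x) :
    (∀ x, f z ≤ f x) ∧ ∀ x, f x = f z → x = z :=
  ⟨fun x => by linarith [hd x, h x],
    fun x hx => hd_eq_zero x (le_antisymm (by linarith [h x]) (hd x))⟩

noncomputable section SoftThreshold

variable {E : Type*} [NormedAddCommGroup E] [InnerProductSpace ℝ E]

theorem one_div_two_mul_norm_sub_sq_add_inner {μ : ℝ} (hμ : 0 < μ) (z p ζ : E) :
    1 / (2 * μ) * ‖z - p‖ ^ 2 + ⟪z, ζ⟫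
      = μ⁻¹ * (‖z - (p - μ • ζ)‖ ^ 2 / 2) + (⟪p, ζ⟫ - μ / 2 * ‖ζ‖ ^ 2) := by
  rw [show z - (p - μ • ζ) = z - p + μ • ζ by abel, norm_add_sq_real, real_inner_smul_right,
    inner_sub_left, norm_smul, Real.norm_of_nonneg hμ.le]
  field_simp
  ring

def softThreshold (lam : ℝ) (c : E) : E :=
  if lam ≤ ‖c‖ then ((‖c‖ - lam) / ‖c‖) • c else 0

def softThresholdObjective (lam : ℝ) (a b : E) (z : E × E) : ℝ :=
  (‖z.1 - a‖ ^ 2 + ‖z.2 - b‖ ^ 2) / 2 + lam * ‖z.1 - z.2‖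

def softThresholdPair (lam : ℝ) (a b : E) : E × E :=
  ((2 : ℝ)⁻¹ • (a + b) + softThreshold lam ((2 : ℝ)⁻¹ • (a - b)),
    (2 : ℝ)⁻¹ • (a + b) - softThreshold lam ((2 : ℝ)⁻¹ • (a - b)))

/-- `c - softThreshold lam c` is a subgradient of `lam * ‖·‖` at `softThreshold lam c`. -/
theorem norm_softThreshold_add_inner_le {lam : ℝ} (hlam : 0 ≤ lam) (c v : E) :
    lam * ‖softThreshold lam c‖ + ⟪c - softThreshold lam c, v - softThreshold lam c⟫
      ≤ lam * ‖v‖ := by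
  have hcs := real_inner_le_norm c v
  unfold softThreshold
  split_ifs with h
  · rcases eq_or_ne c 0 with rfl | hc
    · simp [mul_nonneg hlam (norm_nonneg v)]
    have hc' : 0 < ‖c‖ := norm_pos_iff.mpr hc
    set s := (‖c‖ - lam) / ‖c‖ with hs
    have hs0 : 0 ≤ s := div_nonneg (sub_nonneg.mpr h) hc'.le
    have hres : c - s • c = (lam / ‖c‖) • c := by
      rw [show lam / ‖c‖ = 1 - s by rw [hs]; field_simp; ring, sub_smul, one_smul]
    have hnorm : ‖s • c‖ = ‖c‖ - lam := by
      rw [norm_smul, Real.norm_of_nonneg hs0, hs, div_mul_cancel₀ _ hc'.ne']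
    rw [hres, hnorm, inner_sub_right, real_inner_smul_left, real_inner_smul_left,
      real_inner_smul_right, real_inner_self_eq_norm_sq]
    calc lam * (‖c‖ - lam) + (lam / ‖c‖ * ⟪c, v⟫ - lam / ‖c‖ * (s * ‖c‖ ^ 2))
        = lam / ‖c‖ * ⟪c, v⟫ := by rw [hs]; field_simp; ring
      _ ≤ lam / ‖c‖ * (‖c‖ * ‖v‖) := by gcongr
      _ = lam * ‖v‖ := by field_simp
  · calc lam * ‖(0 : E)‖ + ⟪c - 0, v - 0⟫ = ⟪c, v⟫ := by simp
      _ ≤ ‖c‖ * ‖v‖ := hcs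
      _ ≤ lam * ‖v‖ := by gcongr; exact (not_le.mp h).le

theorem norm_sub_sq_add_le_of_subgradient {g : E → ℝ} {c w v : E}
    (hg : g w + ⟪c - w, v - w⟫ ≤ g v) :
    ‖w - c‖ ^ 2 / 2 + g w + ‖v - w‖ ^ 2 / 2 ≤ ‖v - c‖ ^ 2 / 2 + g v := by
  have h := norm_sub_sq_real (v - w) (c - w)
  rw [show v - w - (c - w) = v - c by abel, real_inner_comm, norm_sub_rev c w] at h
  linarith

theorem norm_add_sub_sq_add_norm_sub_sub_sq (s t s' t' : E) :
    ‖s + t - (s' + t')‖ ^ 2 + ‖s - t - (s' - t')‖ ^ 2 = 2 * ‖s - s'‖ ^ 2 + 2 * ‖t - t'‖ ^ 2 := by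
  have h := parallelogram_law_with_norm ℝ (s - s') (t - t')
  rw [show s - s' + (t - t') = s + t - (s' + t') by abel,
    show s - s' - (t - t') = s - t - (s' - t') by abel] at h
  linear_combination h

theorem softThresholdPair_add_sub (lam : ℝ) (u c : E) :
    softThresholdPair lam (u + c) (u - c) = (u + softThreshold lam c, u - softThreshold lam c) := by
  have hu : (2 : ℝ)⁻¹ • (u + c + (u - c)) = u := by module
  have hc : (2 : ℝ)⁻¹ • (u + c - (u - c)) = c := by module
  simp only [softThresholdPair, hu, hc]

theorem norm_add_sub_sub (u v : E) : ‖u + v - (u - v)‖ = 2 * ‖v‖ := by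
  rw [show u + v - (u - v) = (2 : ℝ) • v by module, norm_smul, Real.norm_two]

theorem softThresholdObjective_softThresholdPair_add_le {lam : ℝ} (hlam : 0 ≤ lam) (a b : E)
    (z : E × E) :
    softThresholdObjective lam a b (softThresholdPair lam a b)
        + (‖z.1 - (softThresholdPair lam a b).1‖ ^ 2 + ‖z.2 - (softThresholdPair lam a b).2‖ ^ 2) / 2
      ≤ softThresholdObjective lam a b z := by
  obtain ⟨x, y⟩ := z
  obtain ⟨u, v, rfl, rfl⟩ : ∃ u v : E, x = u + v ∧ y = u - v :=
    ⟨(2 : ℝ)⁻¹ • (x + y), (2 : ℝ)⁻¹ • (x - y), by module, by module⟩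
  obtain ⟨u₀, c, rfl, rfl⟩ : ∃ u₀ c : E, a = u₀ + c ∧ b = u₀ - c :=
    ⟨(2 : ℝ)⁻¹ • (a + b), (2 : ℝ)⁻¹ • (a - b), by module, by module⟩
  rw [softThresholdPair_add_sub]
  set w := softThreshold lam c
  have hprox : ‖w - c‖ ^ 2 / 2 + lam * ‖w‖ + ‖v - w‖ ^ 2 / 2 ≤ ‖v - c‖ ^ 2 / 2 + lam * ‖v‖ :=
    norm_sub_sq_add_le_of_subgradient (g := fun z => lam * ‖z‖)
      (norm_softThreshold_add_inner_le hlam c v)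
  have hz := norm_add_sub_sq_add_norm_sub_sub_sq u v u₀ c
  have hw := norm_add_sub_sq_add_norm_sub_sub_sq u₀ w u₀ c
  have hzw := norm_add_sub_sq_add_norm_sub_sub_sq u v u₀ w
  rw [sub_self, norm_zero] at hw
  simp only [softThresholdObjective, norm_add_sub_sub]
  linarith

end SoftThreshold

/-- The proximal operator of the template function
`φ_{ρ,ζ,η}(p,q) = ⟨p,ζ⟩ + ⟨q,η⟩ + ρ‖p − q‖` with step `μ` at `(p,q)` is
`T_{μρ}(p − μζ, q − μη)`. -/
theorem prox_of_template_function {m : ℕ} (ρ μ : ℝ) (hρ : 0 < ρ) (hμ : 0 < μ)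
    (p q ζ η : EuclideanSpace ℝ (Fin m)) :
    let t : ℝ → EuclideanSpace ℝ (Fin m) → EuclideanSpace ℝ (Fin m) :=
      fun lam c => if lam ≤ ‖c‖ then ((‖c‖ - lam) / ‖c‖) • c else 0
    let T : ℝ → EuclideanSpace ℝ (Fin m) → EuclideanSpace ℝ (Fin m) →
        EuclideanSpace ℝ (Fin m) × EuclideanSpace ℝ (Fin m) :=
      fun lam a b => ((2 : ℝ)⁻¹ • (a + b) + t lam ((2 : ℝ)⁻¹ • (a - b)),
                      (2 : ℝ)⁻¹ • (a + b) - t lam ((2 : ℝ)⁻¹ • (a - b)))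
    let φ : EuclideanSpace ℝ (Fin m) → EuclideanSpace ℝ (Fin m) → ℝ :=
      fun x y => ⟪x, ζ⟫ + ⟪y, η⟫ + ρ * ‖x - y‖
    let f : EuclideanSpace ℝ (Fin m) × EuclideanSpace ℝ (Fin m) → ℝ :=
      fun xy => 1 / (2 * μ) * ‖xy.1 - p‖ ^ 2 + 1 / (2 * μ) * ‖xy.2 - q‖ ^ 2 + φ xy.1 xy.2
    (∀ xy, f (T (μ * ρ) (p - μ • ζ) (q - μ • η)) ≤ f xy) ∧
    ∀ xy, f xy = f (T (μ * ρ) (p - μ • ζ) (q - μ • η)) →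
      xy = T (μ * ρ) (p - μ • ζ) (q - μ • η) := by
  intro t T φ f
  set a := p - μ • ζ
  set b := q - μ • η
  set z := softThresholdPair (μ * ρ) a b
  -- `T` and `t` are `softThresholdPair` and `softThreshold` unfolded
  change (∀ xy, f z ≤ f xy) ∧ ∀ xy, f xy = f z → xy = z
  have hf : ∀ xy, f xy = μ⁻¹ * softThresholdObjective (μ * ρ) a b xy
      + (⟪p, ζ⟫ - μ / 2 * ‖ζ‖ ^ 2 + (⟪q, η⟫ - μ / 2 * ‖η‖ ^ 2)) := by
    intro xy
    have hx := one_div_two_mul_norm_sub_sq_add_inner hμ xy.1 p ζ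
    have hy := one_div_two_mul_norm_sub_sq_add_inner hμ xy.2 q η
    simp only [f, φ, softThresholdObjective]
    field_simp at hx hy ⊢
    linear_combination hx + hy
  refine forall_le_and_eq_of_forall_add_le
    (d := fun xy => μ⁻¹ * ((‖xy.1 - z.1‖ ^ 2 + ‖xy.2 - z.2‖ ^ 2) / 2)) (fun _ => by positivity)
    (fun xy hxy => ?_) (fun xy => ?_)
  · simpa [hμ.ne', add_eq_zero_iff_of_nonneg, sub_eq_zero, Prod.ext_iff] using hxy
  · have h := softThresholdObjective_softThresholdPair_add_le (mul_pos hμ hρ).le a b xy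
    have h' := mul_le_mul_of_nonneg_left h (inv_nonneg.2 hμ.le)
    simp only [hf]
    linarith
end

section
/- Let the ideal transport LP min Σ Y_{α,β}D_{α,β} over Y ≥ 0 with row sums σ_α and column sums σ^β = σ_{π⁻¹(β)} have a strictly positive diagonal solution (Y_{α,π(α)} > 0 for all α), and let (p_α, q_β) be optimal dual variables. Then for every vector δ = (δ_α) with Σ_α δ_α = 0 and ‖δ‖₁ − ‖δ‖_∞ ≤ min_α Y_{α,π(α)}, setting δ^β = −δ_{π⁻¹(β)}, one has Σ_α p_α δ_α + Σ_β q_β δ^β ≤ Δ₀ (‖δ‖₁ − ‖δ‖_∞), where Δ₀ = max_{α,α′} |2D̃_{α,α′} − D̃_{α,α} − D̃_{α′,α′}| and D̃_{α,α′} = D_{α,π(α′)}. -/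
open Finset

/-- Dual-perturbation lemma: for a strictly positive diagonal optimal plan and optimal dual
variables, any zero-sum perturbation `δ` of the masses satisfies
`Σ p_α δ_α + Σ q_β δ^β ≤ Δ₀(‖δ‖₁ − ‖δ‖_∞)`. -/
theorem dual_perturbation_bound {K : ℕ} (hK : 2 ≤ K)
    (D : Fin K → Fin K → ℝ) (π : Equiv.Perm (Fin K))
    (σ : Fin K → ℝ) (hσ : ∀ α, 0 < σ α)
    (Y : Fin K → Fin K → ℝ) (hY : ∀ α β, 0 ≤ Y α β)
    (hrow : ∀ α, ∑ β, Y α β = σ α) (hcol : ∀ β, ∑ α, Y α β = σ (π.symm β))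
    (hopt : ∀ X : Fin K → Fin K → ℝ, (∀ α β, 0 ≤ X α β) →
      (∀ α, ∑ β, X α β = σ α) → (∀ β, ∑ α, X α β = σ (π.symm β)) →
      ∑ α, ∑ β, Y α β * D α β ≤ ∑ α, ∑ β, X α β * D α β)
    (hpos : ∀ α, 0 < Y α (π α))
    (p q : Fin K → ℝ)
    (hfeas : ∀ α β, p α + q β ≤ D α β)
    (hcomp : ∀ α β, 0 < Y α β → p α + q β = D α β)
    (hdual : ∑ α, ∑ β, Y α β * D α β = ∑ α, p α * σ α + ∑ β, q β * σ (π.symm β))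
    (dv : Fin K → ℝ) (hzero : ∑ α, dv α = 0)
    (hsmall : ∑ α, |dv α| - (⨆ α, |dv α|) ≤ ⨅ α, Y α (π α)) :
    ∑ α, p α * dv α + ∑ β, q β * (-dv (π.symm β)) ≤
      (⨆ α, ⨆ α', |2 * D α (π α') - D α (π α) - D α' (π α')|) *
        (∑ α, |dv α| - ⨆ α, |dv α|) := by
  haveI : NeZero K := ⟨by omega⟩
  set r : Fin K → ℝ := fun α => p α - q (π α) with hr
  set Δ : ℝ := ⨆ α, ⨆ α', |2 * D α (π α') - D α (π α) - D α' (π α')| with hΔ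
  have hΔle : ∀ α α', |2 * D α (π α') - D α (π α) - D α' (π α')| ≤ Δ := by
    intro α α'
    calc |2 * D α (π α') - D α (π α) - D α' (π α')|
        ≤ ⨆ α', |2 * D α (π α') - D α (π α) - D α' (π α')| :=
          le_ciSup (f := fun b => |2 * D α (π b) - D α (π α) - D b (π b)|)
            (Set.Finite.bddAbove (Set.finite_range _)) α'
      _ ≤ Δ := le_ciSup (f := fun α => ⨆ α', |2 * D α (π α') - D α (π α) - D α' (π α')|)
            (Set.Finite.bddAbove (Set.finite_range _)) α
  have hΔ0 : 0 ≤ Δ :=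
    le_trans (abs_nonneg _) (hΔle (Classical.arbitrary _) (Classical.arbitrary _))
  have hrdiff : ∀ α α', r α - r α' ≤ Δ := by
    intro α α'
    have e1 := hcomp α (π α) (hpos α)
    have e2 := hcomp α' (π α') (hpos α')
    have f := hfeas α (π α')
    have h1 := hΔle α α'
    have h2 := le_abs_self (2 * D α (π α') - D α (π α) - D α' (π α'))
    simp only [hr]
    linarith
  obtain ⟨a, ha⟩ := Finite.exists_max (fun α => |dv α|)
  have hSup : (⨆ α, |dv α|) = |dv a| :=
    le_antisymm (ciSup_le ha)
      (le_ciSup (f := fun α => |dv α|) (Set.Finite.bddAbove (Set.finite_range _)) a)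
  have h1 : ∑ β, q β * (-dv (π.symm β)) = ∑ α, q (π α) * (-dv α) :=
    (Fintype.sum_equiv π _ _ (fun x => by simp)).symm
  have hLHS : ∑ α, p α * dv α + ∑ β, q β * (-dv (π.symm β)) = ∑ α, (r α - r a) * dv α := by
    rw [h1, ← Finset.sum_add_distrib]
    have : ∑ α, (r α - r a) * dv α = ∑ α, r α * dv α - r a * ∑ α, dv α := by
      rw [Finset.mul_sum, ← Finset.sum_sub_distrib]
      exact Finset.sum_congr rfl fun x _ => by ring
    rw [this, hzero, mul_zero, sub_zero]
    exact Finset.sum_congr rfl fun x _ => by simp [hr]; ring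
  rw [hLHS, hSup]
  have hstep : ∑ α, (r α - r a) * dv α = ∑ α ∈ univ.erase a, (r α - r a) * dv α :=
    (Finset.sum_erase _ (by ring)).symm
  rw [hstep]
  calc ∑ α ∈ univ.erase a, (r α - r a) * dv α
      ≤ ∑ α ∈ univ.erase a, Δ * |dv α| := by
        refine Finset.sum_le_sum fun α _ => ?_
        have h3 : (r α - r a) * dv α ≤ |r α - r a| * |dv α| := by
          calc (r α - r a) * dv α ≤ |(r α - r a) * dv α| := le_abs_self _
            _ = |r α - r a| * |dv α| := abs_mul _ _
        have h4 : |r α - r a| ≤ Δ := abs_le.mpr ⟨by linarith [hrdiff a α], hrdiff α a⟩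
        calc (r α - r a) * dv α ≤ |r α - r a| * |dv α| := h3
          _ ≤ Δ * |dv α| := mul_le_mul_of_nonneg_right h4 (abs_nonneg _)
    _ = Δ * (∑ α, |dv α| - |dv a|) := by
        rw [← Finset.mul_sum, Finset.sum_erase_eq_sub (Finset.mem_univ a)]
end

section
/- Under the hypotheses of the dual-perturbation lemma (strictly positive diagonal optimal plan for the ideal transport LP), there exists a choice of optimal dual variables (p_α, q_β) satisfying |p_α| ≤ Δ₁ and |q_β| ≤ Δ₁ for all α, β, where Δ₁ = (Δ₀ + max_α |D̃_{α,α}|)/2 and Δ₀ = max_{α,α′} |2D̃_{α,α′} − D̃_{α,α} − D̃_{α′,α′}|. -/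
open Finset

/-- There is a choice of optimal dual variables bounded in absolute value by
`Δ₁ = (Δ₀ + max_α |D̃_{α,α}|)/2`. -/
theorem bounded_optimal_duals_exist {K : ℕ} (hK : 0 < K)
    (D : Fin K → Fin K → ℝ) (π : Equiv.Perm (Fin K))
    (σ : Fin K → ℝ) (hσ : ∀ α, 0 < σ α)
    (Y : Fin K → Fin K → ℝ) (hY : ∀ α β, 0 ≤ Y α β)
    (hrow : ∀ α, ∑ β, Y α β = σ α) (hcol : ∀ β, ∑ α, Y α β = σ (π.symm β))
    (hpos : ∀ α, 0 < Y α (π α))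
    (p₀ q₀ : Fin K → ℝ)
    (hfeas₀ : ∀ α β, p₀ α + q₀ β ≤ D α β)
    (hcomp₀ : ∀ α β, 0 < Y α β → p₀ α + q₀ β = D α β)
    (hdual₀ : ∑ α, ∑ β, Y α β * D α β = ∑ α, p₀ α * σ α + ∑ β, q₀ β * σ (π.symm β)) :
    ∃ p q : Fin K → ℝ,
      (∀ α β, p α + q β ≤ D α β) ∧
      (∀ α β, 0 < Y α β → p α + q β = D α β) ∧
      (∑ α, ∑ β, Y α β * D α β = ∑ α, p α * σ α + ∑ β, q β * σ (π.symm β)) ∧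
      (∀ α, |p α| ≤ ((⨆ α', ⨆ α'', |2 * D α' (π α'') - D α' (π α') - D α'' (π α'')|) +
          ⨆ α', |D α' (π α')|) / 2) ∧
      (∀ β, |q β| ≤ ((⨆ α', ⨆ α'', |2 * D α' (π α'') - D α' (π α') - D α'' (π α'')|) +
          ⨆ α', |D α' (π α')|) / 2) := by
  haveI : Nonempty (Fin K) := ⟨⟨0, hK⟩⟩
  set Δ₀ : ℝ := ⨆ α', ⨆ α'', |2 * D α' (π α'') - D α' (π α') - D α'' (π α'')| with hΔ₀
  set M : ℝ := ⨆ α', |D α' (π α')| with hM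
  -- bound on each term of Δ₀
  have hΔ₀le : ∀ a b : Fin K, |2 * D a (π b) - D a (π a) - D b (π b)| ≤ Δ₀ := by
    intro a b
    have h1 : |2 * D a (π b) - D a (π a) - D b (π b)| ≤
        ⨆ α'', |2 * D a (π α'') - D a (π a) - D α'' (π α'')| :=
      le_ciSup (f := fun α'' => |2 * D a (π α'') - D a (π a) - D α'' (π α'')|)
        (Set.Finite.bddAbove (Set.finite_range _)) b
    have h2 : (⨆ α'', |2 * D a (π α'') - D a (π a) - D α'' (π α'')|) ≤ Δ₀ :=
      le_ciSup (f := fun α' => ⨆ α'', |2 * D α' (π α'') - D α' (π α') - D α'' (π α'')|)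
        (Set.Finite.bddAbove (Set.finite_range _)) a
    exact h1.trans h2
  have hMle : ∀ a : Fin K, |D a (π a)| ≤ M :=
    fun a => le_ciSup (f := fun α' => |D α' (π α')|)
      (Set.Finite.bddAbove (Set.finite_range _)) a
  -- complementary slackness along the diagonal
  have hdiag : ∀ α, p₀ α + q₀ (π α) = D α (π α) := fun α => hcomp₀ α (π α) (hpos α)
  set α₀ : Fin K := ⟨0, hK⟩
  set lam : ℝ := p₀ α₀ - D α₀ (π α₀) / 2 with hlam
  refine ⟨fun α => p₀ α - lam, fun β => q₀ β + lam, ?_, ?_, ?_, ?_, ?_⟩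
  · intro α β; show p₀ α - lam + (q₀ β + lam) ≤ D α β
    have := hfeas₀ α β; linarith
  · intro α β h; show p₀ α - lam + (q₀ β + lam) = D α β
    have := hcomp₀ α β h; linarith
  · have hsum : ∑ β, σ (π.symm β) = ∑ α, σ α := Equiv.sum_comp π.symm σ
    have e1 : ∑ α, (p₀ α - lam) * σ α = ∑ α, p₀ α * σ α - lam * ∑ α, σ α := by
      rw [Finset.mul_sum, ← Finset.sum_sub_distrib]; congr 1; ext α; ring
    have e2 : ∑ β, (q₀ β + lam) * σ (π.symm β)
        = ∑ β, q₀ β * σ (π.symm β) + lam * ∑ β, σ (π.symm β) := by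
      rw [Finset.mul_sum, ← Finset.sum_add_distrib]; congr 1; ext β; ring
    rw [e1, e2, hsum]; linarith
  all_goals
  · -- key centered bound
    have key : ∀ α, |p₀ α - lam - D α (π α) / 2| ≤ Δ₀ / 2 := by
      intro α
      have f1 : p₀ α - p₀ α₀ ≤ D α (π α₀) - D α₀ (π α₀) := by
        have := hfeas₀ α (π α₀); have := hdiag α₀; linarith
      have f2 : p₀ α₀ - p₀ α ≤ D α₀ (π α) - D α (π α) := by
        have := hfeas₀ α₀ (π α); have := hdiag α; linarith
      have b1 := (abs_le.mp (hΔ₀le α α₀)).2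
      have b2 := (abs_le.mp (hΔ₀le α₀ α)).2
      rw [abs_le]; constructor <;> [skip; skip] <;> simp only [hlam] <;> linarith
    first
    | (intro α
       have h1 := key α
       have h2 := hMle α
       have := abs_add_le (p₀ α - lam - D α (π α) / 2) (D α (π α) / 2)
       have habs : |D α (π α) / 2| = |D α (π α)| / 2 := by
         rw [abs_div]; norm_num
       calc |p₀ α - lam| = |(p₀ α - lam - D α (π α) / 2) + D α (π α) / 2| := by ring_nf
         _ ≤ |p₀ α - lam - D α (π α) / 2| + |D α (π α) / 2| := abs_add_le _ _
         _ ≤ Δ₀ / 2 + |D α (π α)| / 2 := by rw [habs]; linarith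
         _ ≤ (Δ₀ + M) / 2 := by linarith)
    | (intro β
       set α := π.symm β with hα
       have hβ : π α = β := π.apply_symm_apply β
       have hq : q₀ β + lam = D α (π α) / 2 - (p₀ α - lam - D α (π α) / 2) := by
         have := hdiag α; rw [← hβ]; linarith
       have h1 := key α
       have h2 := hMle α
       have habs : |D α (π α) / 2| = |D α (π α)| / 2 := by rw [abs_div]; norm_num
       calc |q₀ β + lam|
           = |D α (π α) / 2 - (p₀ α - lam - D α (π α) / 2)| := by rw [hq]
         _ ≤ |D α (π α) / 2| + |p₀ α - lam - D α (π α) / 2| := abs_sub _ _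
         _ ≤ |D α (π α)| / 2 + Δ₀ / 2 := by rw [habs]; linarith
         _ ≤ (Δ₀ + M) / 2 := by linarith)
end

section
/- For optimal dual variables (p_α, q_β) of the ideal transport LP with strictly positive diagonal plan, any two distinct indices α₁ ≠ α₂ satisfy |p_{α₁} − p_{α₂} − q_{π(α₁)} + q_{π(α₂)}| ≤ Δ₀, where q is re-indexed along π and Δ₀ = max_{α,α′} |2D̃_{α,α′} − D̃_{α,α} − D̃_{α′,α′}|. -/
open Finset

/-- For optimal dual variables of the ideal transport LP with strictly positive diagonal plan,
`|p_{α₁} − p_{α₂} − q_{π(α₁)} + q_{π(α₂)}| ≤ Δ₀` for all distinct `α₁, α₂`. -/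
theorem dual_difference_bound {K : ℕ} (hK : 2 ≤ K)
    (D : Fin K → Fin K → ℝ) (π : Equiv.Perm (Fin K))
    (σ : Fin K → ℝ) (hσ : ∀ α, 0 < σ α)
    (Y : Fin K → Fin K → ℝ) (hY : ∀ α β, 0 ≤ Y α β)
    (hrow : ∀ α, ∑ β, Y α β = σ α) (hcol : ∀ β, ∑ α, Y α β = σ (π.symm β))
    (hpos : ∀ α, 0 < Y α (π α))
    (p q : Fin K → ℝ)
    (hfeas : ∀ α β, p α + q β ≤ D α β)
    (hcomp : ∀ α β, 0 < Y α β → p α + q β = D α β)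
    (hdual : ∑ α, ∑ β, Y α β * D α β = ∑ α, p α * σ α + ∑ β, q β * σ (π.symm β)) :
    ∀ α₁ α₂ : Fin K, α₁ ≠ α₂ →
      |p α₁ - p α₂ - q (π α₁) + q (π α₂)| ≤
        ⨆ α, ⨆ α', |2 * D α (π α') - D α (π α) - D α' (π α')| := by
  intro α₁ α₂ _
  have hKpos : 0 < K := by omega
  have hne : Nonempty (Fin K) := ⟨⟨0, hKpos⟩⟩
  have key : ∀ a b : Fin K, |2 * D a (π b) - D a (π a) - D b (π b)| ≤
      ⨆ α, ⨆ α', |2 * D α (π α') - D α (π α) - D α' (π α')| := by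
    intro a b
    have h1 : |2 * D a (π b) - D a (π a) - D b (π b)| ≤
        ⨆ α', |2 * D a (π α') - D a (π a) - D α' (π α')| :=
      le_ciSup (f := fun α' => |2 * D a (π α') - D a (π a) - D α' (π α')|)
        (Set.Finite.bddAbove (Set.finite_range _)) b
    exact h1.trans (le_ciSup
      (f := fun α => ⨆ α', |2 * D α (π α') - D α (π α) - D α' (π α')|)
      (Set.Finite.bddAbove (Set.finite_range _)) a)
  have hd1 : p α₁ + q (π α₁) = D α₁ (π α₁) := hcomp _ _ (hpos α₁)
  have hd2 : p α₂ + q (π α₂) = D α₂ (π α₂) := hcomp _ _ (hpos α₂)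
  have hf1 : p α₁ + q (π α₂) ≤ D α₁ (π α₂) := hfeas _ _
  have hf2 : p α₂ + q (π α₁) ≤ D α₂ (π α₁) := hfeas _ _
  rw [abs_le]
  constructor
  · have := key α₂ α₁
    nlinarith [le_abs_self (2 * D α₂ (π α₁) - D α₂ (π α₂) - D α₁ (π α₁)), key α₂ α₁]
  · nlinarith [le_abs_self (2 * D α₁ (π α₂) - D α₁ (π α₁) - D α₂ (π α₂)), key α₁ α₂]
end
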